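/- Let F be a finite field with 2^m elements equipped with the inner product over 𝔽₂ with respect to a fixed 𝔽₂-basis, let n ≥ 1, and let S ⊆ {0,1,…,n−1} be a nonempty set of exponents. Then for α, β drawn independently and uniformly from F, Pr_{α,β}[ ⊕_{i∈S} ⟨α^i, β⟩₂ = 1 ] = (1/2) · Pr_{α}[ Σ_{i∈S} α^i ≠ 0 ], where the sum Σ_{i∈S} α^i is taken in the field F. -/
import Mathlib


open Matrix Kronecker
open scoped ComplexOrder

/-- Bit strings of length `n`. -/
abbrev BS (n : ℕ) : Type := Fin n → Bool

/-- `⟨x,y⟩₂ = Σᵢ e(x)ᵢ · e(y)ᵢ ∈ 𝔽₂`, the inner product with respect to the coordinate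
isomorphism `e`. -/
def innerF2 {F : Type*} [AddCommGroup F] [Module (ZMod 2) F] {m : ℕ}
    (e : F ≃ₗ[ZMod 2] (Fin m → ZMod 2)) (x y : F) : ZMod 2 :=
  ∑ i, e x i * e y i

lemma innerF2_sum_left {F : Type*} [AddCommGroup F] [Module (ZMod 2) F] {m : ℕ}
    (e : F ≃ₗ[ZMod 2] (Fin m → ZMod 2)) {ι : Type*} (S : Finset ι) (f : ι → F) (y : F) :
    ∑ i ∈ S, innerF2 e (f i) y = innerF2 e (∑ i ∈ S, f i) y := by
  unfold innerF2
  rw [Finset.sum_comm]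
  refine Finset.sum_congr rfl fun j _ => ?_
  rw [← Finset.sum_mul, map_sum, Finset.sum_apply]

lemma innerF2_zero_left {F : Type*} [AddCommGroup F] [Module (ZMod 2) F] {m : ℕ}
    (e : F ≃ₗ[ZMod 2] (Fin m → ZMod 2)) (y : F) : innerF2 e 0 y = 0 := by
  unfold innerF2; simp

lemma innerF2_add_right {F : Type*} [AddCommGroup F] [Module (ZMod 2) F] {m : ℕ}
    (e : F ≃ₗ[ZMod 2] (Fin m → ZMod 2)) (x y z : F) :
    innerF2 e x (y + z) = innerF2 e x y + innerF2 e x z := by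
  unfold innerF2
  rw [← Finset.sum_add_distrib]
  refine Finset.sum_congr rfl fun j _ => ?_
  rw [map_add]
  simp [mul_add]

lemma half_card {F : Type*} [AddCommGroup F] [Module (ZMod 2) F] [Fintype F] [DecidableEq F]
    {m : ℕ} (e : F ≃ₗ[ZMod 2] (Fin m → ZMod 2)) {x : F} (hx : x ≠ 0) :
    2 * (Finset.univ.filter fun y : F => innerF2 e x y = 1).card = Fintype.card F := by
  -- find y₀ with innerF2 e x y₀ = 1
  have hex : e x ≠ 0 := fun h => hx (by simpa using congrArg e.symm h)
  obtain ⟨i, hi⟩ := Function.ne_iff.mp hex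
  simp only [Pi.zero_apply] at hi
  have hi1 : e x i = 1 := by revert hi; generalize e x i = a; revert a; decide
  set y₀ : F := e.symm (Pi.single i 1) with hy₀
  have hφ : innerF2 e x y₀ = 1 := by
    unfold innerF2
    rw [hy₀, e.apply_symm_apply]
    rw [Finset.sum_eq_single i]
    · simp [hi1]
    · intro j _ hj; simp [Pi.single_apply, hj]
    · simp
  have hsplit : (Finset.univ.filter fun y : F => innerF2 e x y = 1).card
      + (Finset.univ.filter fun y : F => ¬ innerF2 e x y = 1).card = Fintype.card F := by
    rw [Finset.card_filter_add_card_filter_not]; rfl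
  have hbij : (Finset.univ.filter fun y : F => innerF2 e x y = 1).card
      = (Finset.univ.filter fun y : F => ¬ innerF2 e x y = 1).card := by
    apply Finset.card_bij (fun y _ => y + y₀)
    · intro y hy
      simp only [Finset.mem_filter, Finset.mem_univ, true_and] at hy ⊢
      rw [innerF2_add_right, hy, hφ]
      decide
    · intro a ha b hb h; exact add_right_cancel h
    · intro z hz
      simp only [Finset.mem_filter, Finset.mem_univ, true_and] at hz
      refine ⟨z + y₀, ?_, ?_⟩
      · simp only [Finset.mem_filter, Finset.mem_univ, true_and]
        rw [innerF2_add_right, hφ]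
        have : innerF2 e x z = 0 := by
          have h2 := innerF2 e x z
          -- in ZMod 2, not 1 means 0
          revert hz; generalize innerF2 e x z = a; revert a; decide
        rw [this]; decide
      · rw [add_assoc]
        have : y₀ + y₀ = 0 := by
          have h2 : (2 : ZMod 2) • y₀ = 0 := by
            rw [show (2 : ZMod 2) = 0 by decide, zero_smul]
          rwa [two_smul] at h2
        rw [this, add_zero]
  omega

/-- For a finite field `F` with `2^m` elements and a nonempty set
`S ⊆ {0,…,n−1}` of exponents, for `α, β` independent and uniform in `F`,
`Pr[⊕_{i∈S} ⟨αⁱ,β⟩₂ = 1] = (1/2) · Pr[Σ_{i∈S} αⁱ ≠ 0]`. -/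
theorem prob_xor_inner_powers_eq_half_prob_sum_ne_zero
    (m : ℕ) (F : Type*) [Field F] [Fintype F] [DecidableEq F] [Module (ZMod 2) F]
    (hF : Fintype.card F = 2 ^ m)
    (e : F ≃ₗ[ZMod 2] (Fin m → ZMod 2))
    (n : ℕ) (hn : 1 ≤ n) (S : Finset (Fin n)) (hS : S.Nonempty) :
    (Fintype.card (F × F) : ℝ)⁻¹ *
        ((Finset.univ.filter fun p : F × F =>
            ∑ i ∈ S, innerF2 e (p.1 ^ (i : ℕ)) p.2 = 1).card : ℝ) =
      (1 / 2) * ((Fintype.card F : ℝ)⁻¹ *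
        ((Finset.univ.filter fun α : F => ∑ i ∈ S, α ^ (i : ℕ) ≠ 0).card : ℝ)) := by
  set q := Fintype.card F with hq
  have hq0 : 0 < q := Fintype.card_pos
  -- key counting identity over ℕ
  have key : 2 * (Finset.univ.filter fun p : F × F =>
      ∑ i ∈ S, innerF2 e (p.1 ^ (i : ℕ)) p.2 = 1).card
      = q * (Finset.univ.filter fun α : F => ∑ i ∈ S, α ^ (i : ℕ) ≠ 0).card := by
    have hcount : (Finset.univ.filter fun p : F × F =>
        ∑ i ∈ S, innerF2 e (p.1 ^ (i : ℕ)) p.2 = 1).card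
        = ∑ α : F, (Finset.univ.filter fun β : F =>
            innerF2 e (∑ i ∈ S, α ^ (i : ℕ)) β = 1).card := by
      rw [Finset.card_filter]
      rw [Fintype.sum_prod_type]
      refine Finset.sum_congr rfl fun α _ => ?_
      rw [Finset.card_filter]
      refine Finset.sum_congr rfl fun β _ => ?_
      rw [innerF2_sum_left]
    rw [hcount, Finset.mul_sum]
    rw [Finset.card_filter, Finset.mul_sum]
    refine Finset.sum_congr rfl fun α _ => ?_
    by_cases hα : ∑ i ∈ S, α ^ (i : ℕ) = 0
    · rw [hα]
      have : (Finset.univ.filter fun β : F => innerF2 e (0 : F) β = 1) = ∅ := by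
        apply Finset.filter_false_of_mem
        intro β _
        rw [innerF2_zero_left]; decide
      rw [this]
      simp [hα]
    · rw [half_card e hα, if_pos hα]
      simp [hq]
  -- now transfer to ℝ
  have hcard : (Fintype.card (F × F) : ℝ) = (q : ℝ) * q := by
    rw [Fintype.card_prod]; push_cast [hq]; ring
  rw [hcard]
  have hkeyR : (2 : ℝ) * ((Finset.univ.filter fun p : F × F =>
      ∑ i ∈ S, innerF2 e (p.1 ^ (i : ℕ)) p.2 = 1).card : ℝ)
      = (q : ℝ) * ((Finset.univ.filter fun α : F => ∑ i ∈ S, α ^ (i : ℕ) ≠ 0).card : ℝ) := by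
    exact_mod_cast key
  have hq0R : (q : ℝ) ≠ 0 := by positivity
  simp only [ne_eq] at hkeyR ⊢
  have hP : ((Finset.univ.filter fun p : F × F =>
      ∑ i ∈ S, innerF2 e (p.1 ^ (i : ℕ)) p.2 = 1).card : ℝ)
      = (q : ℝ) * ((Finset.univ.filter fun α : F =>
          ¬ ∑ i ∈ S, α ^ (i : ℕ) = 0).card : ℝ) / 2 := by linarith
  rw [hP]
  field_simp
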